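/- Transitivity for ∀⁺ types: for any ∀⁺ type P, the relation ⟦P⟧_e is transitive, i.e., if x ⟦P⟧_e y and y ⟦P⟧_e z, then x ⟦P⟧_e z, where e maps all type variables to =βη. -/
import Mathlib


namespace RelTT

/-- Untyped lambda terms (de Bruijn indices). -/
inductive Term : Type
  | var : ℕ → Term
  | lam : Term → Term
  | app : Term → Term → Term

namespace Term

/-- Lift free variables ≥ c by one. -/
def lift : Term → ℕ → Term
  | var k, c => if k < c then var k else var (k+1)
  | lam t, c => lam (lift t (c+1))
  | app t u, c => app (lift t c) (lift u c)

/-- Capture-avoiding substitution of `s` for variable `n`. -/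
def subst : Term → ℕ → Term → Term
  | var k, n, s => if k = n then s else if n < k then var (k-1) else var k
  | lam t, n, s => lam (subst t (n+1) (lift s 0))
  | app t u, n, s => app (subst t n s) (subst u n s)

end Term

/-- βη-equivalence of untyped lambda terms. -/
inductive Beq : Term → Term → Prop
  | beta (t u : Term) : Beq (Term.app (Term.lam t) u) (Term.subst t 0 u)
  | eta (t : Term) : Beq (Term.lam (Term.app (Term.lift t 0) (Term.var 0))) t
  | refl (t : Term) : Beq t t
  | symm {t u} : Beq t u → Beq u t
  | trans {t u v} : Beq t u → Beq u v → Beq t v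
  | appCongr {t t' u u'} : Beq t t' → Beq u u' → Beq (Term.app t u) (Term.app t' u')
  | lamCongr {t t'} : Beq t t' → Beq (Term.lam t) (Term.lam t')

/-- Binary relations on terms. -/
abbrev Rel := Term → Term → Prop

/-- A relation is βη-closed iff it respects βη-equivalence on both sides. -/
def BetaEtaClosed (r : Rel) : Prop :=
  ∀ t₁ t₂ t₁' t₂', r t₁ t₂ → Beq t₁' t₁ → Beq t₂' t₂ → r t₁' t₂'

/-- Relational types of RelTT (type variables are de Bruijn indices). -/
inductive Ty : Type
  | var : ℕ → Ty
  | arrow : Ty → Ty → Ty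
  | all : Ty → Ty
  | conv : Ty → Ty
  | comp : Ty → Ty → Ty
  | prom : Term → Ty

/-- Environments map type variables to relations. -/
abbrev Env := ℕ → Rel

def Env.cons (r : Rel) (γ : Env) : Env
  | 0 => r
  | n+1 => γ n

/-- The relational semantics of types. -/
def interp : Ty → Env → Rel
  | Ty.var n, γ => γ n
  | Ty.arrow R R', γ => fun t t' =>
      ∀ a a', interp R γ a a' → interp R' γ (Term.app t a) (Term.app t' a')
  | Ty.all R, γ => fun t t' =>
      ∀ r : Rel, BetaEtaClosed r → interp R (Env.cons r γ) t t'
  | Ty.conv R, γ => fun t t' => interp R γ t' t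
  | Ty.comp R R', γ => fun t t' => ∃ u, interp R γ t u ∧ interp R' γ u t'
  | Ty.prom tm, γ => fun t t' => Beq (Term.app tm t) t'

/-- All relations in the environment are βη-closed. -/
def EnvClosed (γ : Env) : Prop := ∀ n, BetaEtaClosed (γ n)

def I : Term := Term.lam (Term.var 0)
def K : Term := Term.lam (Term.lam (Term.var 1))

/-- Polarities. -/
inductive Pol | pos | neg

/-- The opposite polarity. -/
def Pol.flip : Pol → Pol
  | .pos => .neg
  | .neg => .pos

/-- The ∀ᵖ classes of types: ∀⁺ (p = pos) and ∀⁻ (p = neg). -/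
inductive Foral : Pol → Ty → Prop
  | var (p n) : Foral p (Ty.var n)
  | arrow {p R R'} : Foral p.flip R → Foral p R' → Foral p (Ty.arrow R R')
  | all {R} : Foral .pos R → Foral .pos (Ty.all R)
  | conv {p R} : Foral p R → Foral p (Ty.conv R)
  | prom (p) {t} : Beq t I → Foral p (Ty.prom t)

/-- The environment mapping every type variable to βη-equivalence. -/
def e : Env := fun _ => Beq

namespace Term

theorem lift_lift (t : Term) : ∀ c c', c' ≤ c →
    lift (lift t c') (c+1) = lift (lift t c) c' := by
  induction t with
  | var k =>
    intro c c' h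
    simp only [lift]
    split_ifs <;> simp_all [lift] <;> (try split_ifs) <;> first | rfl | omega | (exfalso; omega) | (congr 1; omega)
  | lam t ih =>
    intro c c' h
    simp only [lift]
    rw [ih (c+1) (c'+1) (by omega)]
  | app t u iht ihu =>
    intro c c' h
    simp only [lift, iht c c' h, ihu c c' h]

theorem lift_subst (t : Term) : ∀ u n c, n ≤ c →
    lift (subst t n u) c = subst (lift t (c+1)) n (lift u c) := by
  induction t with
  | var k =>
    intro u n c h
    simp only [lift, subst]
    split_ifs <;> simp_all [lift, subst] <;> (try split_ifs) <;> first | rfl | omega | (exfalso; omega) | (congr 1; omega)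
  | lam t ih =>
    intro u n c h
    simp only [lift, subst]
    rw [ih (lift u 0) (n+1) (c+1) (by omega), lift_lift u c 0 (by omega)]
  | app t v iht ihv =>
    intro u n c h
    simp only [lift, subst, iht u n c h, ihv u n c h]

theorem subst_lift_comm (t : Term) : ∀ s n c, c ≤ n →
    lift (subst t n s) c = subst (lift t c) (n+1) (lift s c) := by
  induction t with
  | var k =>
    intro s n c h
    simp only [lift, subst]
    split_ifs <;> simp_all [lift, subst] <;> (try split_ifs) <;> first | rfl | omega | (exfalso; omega) | (congr 1; omega)
  | lam t ih =>
    intro s n c h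
    simp only [lift, subst]
    rw [ih (lift s 0) (n+1) (c+1) (by omega), lift_lift s c 0 (by omega)]
  | app t v iht ihv =>
    intro s n c h
    simp only [lift, subst, iht s n c h, ihv s n c h]

theorem subst_lift (s : Term) : ∀ c x, subst (lift s c) c x = s := by
  induction s with
  | var k =>
    intro c x
    simp only [lift, subst]
    split_ifs <;> simp_all [subst] <;> (try split_ifs) <;> first | rfl | omega | (exfalso; omega) | (congr 1; omega)
  | lam t ih =>
    intro c x
    simp only [lift, subst, ih]
  | app t u iht ihu =>
    intro c x
    simp only [lift, subst, iht, ihu]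

theorem subst_subst (t : Term) : ∀ u s m n, m ≤ n →
    subst (subst t m u) n s = subst (subst t (n+1) (lift s m)) m (subst u n s) := by
  induction t with
  | var k =>
    intro u s m n h
    simp only [subst]
    split_ifs <;> simp_all [subst, subst_lift] <;> (try split_ifs) <;>
      first | rfl | omega | (exfalso; omega) | (congr 1; omega)
  | lam t ih =>
    intro u s m n h
    simp only [subst]
    rw [ih (lift u 0) (lift s 0) (m+1) (n+1) (by omega), lift_lift s m 0 (by omega),
      ← subst_lift_comm u s n 0 (by omega)]
  | app t v iht ihv =>
    intro u s m n h
    simp only [subst, iht u s m n h, ihv u s m n h]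

/-- Free variables of `t` are all `< c`. -/
def allFreeLt : Term → ℕ → Prop
  | var k, c => k < c
  | lam t, c => allFreeLt t (c+1)
  | app t u, c => allFreeLt t c ∧ allFreeLt u c

theorem allFreeLt_mono : ∀ t c d, allFreeLt t c → c ≤ d → allFreeLt t d := by
  intro t
  induction t with
  | var k => intro c d h hle; exact lt_of_lt_of_le h hle
  | lam t ih => intro c d h hle; exact ih (c+1) (d+1) h (by omega)
  | app t u iht ihu => intro c d h hle; exact ⟨iht _ _ h.1 hle, ihu _ _ h.2 hle⟩

/-- A bound above all free variables. -/
def bound : Term → ℕ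
  | var k => k+1
  | lam t => bound t - 1
  | app t u => max (bound t) (bound u)

theorem allFreeLt_bound : ∀ t, allFreeLt t (bound t) := by
  intro t
  induction t with
  | var k => simp [bound, allFreeLt]
  | lam t ih => exact allFreeLt_mono t _ _ ih (by simp only [bound]; omega)
  | app t u iht ihu =>
    exact ⟨allFreeLt_mono t _ _ iht (le_max_left _ _),
           allFreeLt_mono u _ _ ihu (le_max_right _ _)⟩

theorem allFreeLt_lift : ∀ t n c, allFreeLt t n → allFreeLt (lift t c) (n+1) := by
  intro t
  induction t with
  | var k => intro n c h; simp only [lift]; split_ifs <;> simp_all [allFreeLt] <;> omega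
  | lam t ih => intro n c h; exact ih (n+1) (c+1) h
  | app t u iht ihu => intro n c h; exact ⟨iht n c h.1, ihu n c h.2⟩

theorem subst_of_allFreeLt : ∀ t n s, allFreeLt t n → subst t n s = t := by
  intro t
  induction t with
  | var k =>
    intro n s h
    simp only [allFreeLt] at h
    simp only [subst]
    split_ifs <;> first | (exfalso; omega) | rfl
  | lam t ih => intro n s h; simp only [subst, ih (n+1) _ h]
  | app t u iht ihu => intro n s h; simp only [subst, iht n s h.1, ihu n s h.2]

end Term

theorem Beq.liftCongr {t u : Term} (h : Beq t u) : ∀ c, Beq (Term.lift t c) (Term.lift u c) := by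
  induction h with
  | beta t u =>
    intro c
    rw [Term.lift_subst t u 0 c (by omega)]
    exact Beq.beta _ _
  | eta t =>
    intro c
    simp only [Term.lift]
    rw [if_pos (by omega), Term.lift_lift t c 0 (by omega)]
    exact Beq.eta _
  | refl t => intro c; exact Beq.refl _
  | symm _ ih => intro c; exact (ih c).symm
  | trans _ _ ih1 ih2 => intro c; exact (ih1 c).trans (ih2 c)
  | appCongr _ _ ih1 ih2 => intro c; exact Beq.appCongr (ih1 c) (ih2 c)
  | lamCongr _ ih => intro c; exact Beq.lamCongr (ih (c+1))

theorem Beq.substCongr {t u : Term} (h : Beq t u) :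
    ∀ n s, Beq (Term.subst t n s) (Term.subst u n s) := by
  induction h with
  | beta t u =>
    intro n s
    rw [Term.subst_subst t u s 0 n (by omega)]
    simp only [Term.subst]
    exact Beq.beta _ _
  | eta t =>
    intro n s
    simp only [Term.subst]
    rw [if_neg (by omega), if_neg (by omega),
      show Term.subst (Term.lift t 0) (n+1) (Term.lift s 0)
         = Term.lift (Term.subst t n s) 0 from
        (Term.subst_lift_comm t s n 0 (by omega)).symm]
    exact Beq.eta _
  | refl t => intro n s; exact Beq.refl _
  | symm _ ih => intro n s; exact (ih n s).symm
  | trans _ _ ih1 ih2 => intro n s; exact (ih1 n s).trans (ih2 n s)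
  | appCongr _ _ ih1 ih2 => intro n s; exact Beq.appCongr (ih1 n s) (ih2 n s)
  | lamCongr _ ih => intro n s; exact Beq.lamCongr (ih (n+1) (Term.lift s 0))

/-- Weak extensionality: if `t x = t' x` for a fresh variable `x`, then `t = t'`. -/
theorem Beq.ext {t t' : Term} {n : ℕ}
    (h1 : Term.allFreeLt t n) (h2 : Term.allFreeLt t' n)
    (h : Beq (Term.app t (Term.var n)) (Term.app t' (Term.var n))) : Beq t t' := by
  have hl := h.liftCongr 0
  simp only [Term.lift, if_neg (show ¬ n < 0 by omega)] at hl
  have hs := hl.substCongr (n+1) (Term.var 0)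
  simp only [Term.subst, if_pos rfl] at hs
  rw [Term.subst_of_allFreeLt _ _ _ (Term.allFreeLt_lift t n 0 h1),
      Term.subst_of_allFreeLt _ _ _ (Term.allFreeLt_lift t' n 0 h2)] at hs
  exact ((Beq.eta t).symm.trans (Beq.lamCongr hs)).trans (Beq.eta t')

theorem Beq.betaEtaClosed : BetaEtaClosed Beq := by
  intro t₁ t₂ t₁' t₂' h h1 h2
  exact (h1.trans h).trans h2.symm

theorem cons_beq_e : Env.cons Beq e = e := by
  funext n
  cases n <;> rfl

theorem app_I_beq (t : Term) : Beq (Term.app I t) t := by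
  have := Beq.beta (Term.var 0) t
  simpa [Term.subst, I] using this

/-- The mutual statement: identity inclusion for ∀⁺, identity expansion for ∀⁻. -/
def PosNeg : Pol → Ty → Prop
  | .pos, P => ∀ t t', interp P e t t' → Beq t t'
  | .neg, P => ∀ t t', Beq t t' → interp P e t t'

theorem identity_inclusion {p P} (h : Foral p P) : PosNeg p P := by
  induction h with
  | var p n =>
    cases p <;> exact fun t t' h => h
  | @arrow p R R' _ _ ihR ihR' =>
    cases p with
    | pos =>
      intro t t' h
      set n := max (Term.bound t) (Term.bound t') with hn
      have ha : interp R e (Term.var n) (Term.var n) := ihR _ _ (Beq.refl _)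
      have := ihR' _ _ (h _ _ ha)
      exact Beq.ext
        (Term.allFreeLt_mono t _ _ (Term.allFreeLt_bound t) (le_max_left _ _))
        (Term.allFreeLt_mono t' _ _ (Term.allFreeLt_bound t') (le_max_right _ _)) this
    | neg =>
      intro t t' hb a a' ha
      exact ihR' _ _ (Beq.appCongr hb (ihR a a' ha))
  | all _ ih =>
    intro t t' h
    have := h Beq Beq.betaEtaClosed
    rw [cons_beq_e] at this
    exact ih _ _ this
  | @conv p R _ ih =>
    cases p with
    | pos => intro t t' h; exact (ih t' t h).symm
    | neg => intro t t' hb; exact ih t' t hb.symm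
  | @prom p tm hb =>
    cases p with
    | pos =>
      intro t t' h
      exact (((app_I_beq t).symm.trans (Beq.appCongr hb.symm (Beq.refl t))).trans h : Beq t t')
    | neg =>
      intro t t' h
      exact ((Beq.appCongr hb (Beq.refl t)).trans (app_I_beq t)).trans h

theorem envClosed_e : EnvClosed e := fun _ => Beq.betaEtaClosed

theorem interp_closed : ∀ (P : Ty) (γ : Env), EnvClosed γ → BetaEtaClosed (interp P γ) := by
  intro P
  induction P with
  | var n => intro γ hγ; exact hγ n
  | arrow R R' ihR ihR' =>
    intro γ hγ t₁ t₂ t₁' t₂' h h1 h2 a a' ha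
    exact ihR' γ hγ _ _ _ _ (h a a' ha) (Beq.appCongr h1 (Beq.refl a)) (Beq.appCongr h2 (Beq.refl a'))
  | all R ih =>
    intro γ hγ t₁ t₂ t₁' t₂' h h1 h2 r hr
    exact ih (Env.cons r γ) (fun n => by cases n with | zero => exact hr | succ m => exact hγ m)
      _ _ _ _ (h r hr) h1 h2
  | conv R ih =>
    intro γ hγ t₁ t₂ t₁' t₂' h h1 h2
    exact ih γ hγ _ _ _ _ h h2 h1
  | comp R R' ihR ihR' =>
    intro γ hγ t₁ t₂ t₁' t₂' h h1 h2
    obtain ⟨u, hu1, hu2⟩ := h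
    exact ⟨u, ihR γ hγ _ _ _ _ hu1 h1 (Beq.refl u), ihR' γ hγ _ _ _ _ hu2 (Beq.refl u) h2⟩
  | prom tm =>
    intro γ hγ t₁ t₂ t₁' t₂' h h1 h2
    exact ((Beq.appCongr (Beq.refl tm) h1).trans h).trans h2.symm


/-- Transitivity for ∀⁺ types: ⟦P⟧_e is transitive. -/
theorem transitivity_forall_pos (P : Ty) (hP : Foral .pos P) :
    ∀ x y z, interp P e x y → interp P e y z → interp P e x z := by
  intro x y z hxy hyz
  have hbeq : Beq x y := identity_inclusion hP x y hxy
  exact interp_closed P e envClosed_e y z x z hyz hbeq (Beq.refl z)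

end RelTT
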